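/- arXiv:1401.4130 — 6 statements merged into one kernel-verified Lean document; each statement's English description precedes it below -/
import Mathlib

section
/- Let Γ be a finite set and let → be a transition relation on ℕ^Γ arising from BPP rules: α → γ iff there is a rule X ↪ β with α(X) ≥ 1 and γ = α - X + β (where X denotes the unit vector at X). Let F ⊆ ℕ^Γ be upward-closed with complement F̄, let α_0 ∈ F̄ and γ ∈ ℕ^Γ. If α_0 → α_1 → ... → α_k is a shortest path with all α_i ∈ F̄ and α_k ≤ γ, then for all 0 ≤ i < j ≤ k we have α_i ≰ α_j. -/
variable {Γ : Type*} [Fintype Γ] [DecidableEq Γ]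

/-- Applying rule `r = (X, β)`: replace one `X`-process by `β`. -/
def applyRule (α : Γ → ℕ) (r : Γ × (Γ → ℕ)) : Γ → ℕ :=
  fun Y => α Y - (if Y = r.1 then 1 else 0) + r.2 Y

/-- One step of the BPP with rule set `rules`. -/
def Step (rules : Finset (Γ × (Γ → ℕ))) (α γ : Γ → ℕ) : Prop :=
  ∃ r ∈ rules, 1 ≤ α r.1 ∧ γ = applyRule α r

lemma key_sim (rules : Finset (Γ × (Γ → ℕ))) (F : Set (Γ → ℕ))
    (hF : ∀ α ∈ F, ∀ β, α ≤ β → β ∈ F) :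
    ∀ m (c : ℕ → (Γ → ℕ)) (a₀ : Γ → ℕ), a₀ ≤ c 0 →
      (∀ ℓ < m, Step rules (c ℓ) (c (ℓ + 1))) →
      (∀ ℓ ≤ m, c ℓ ∉ F) →
      ∃ m' ≤ m, ∃ d : ℕ → (Γ → ℕ),
        d 0 = a₀ ∧ (∀ ℓ < m', Step rules (d ℓ) (d (ℓ + 1))) ∧
        (∀ ℓ ≤ m', d ℓ ∉ F) ∧ d m' ≤ c m := by
  intro m
  induction m with
  | zero =>
    intro c a₀ h0 _ hav
    refine ⟨0, le_rfl, fun _ => a₀, rfl, by omega, ?_, h0⟩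
    intro ℓ hℓ
    interval_cases ℓ
    exact fun h => hav 0 le_rfl (hF _ h _ h0)
  | succ m ih =>
    intro c a₀ h0 hstep hav
    obtain ⟨r, hr, hge, heq⟩ := hstep 0 (Nat.succ_pos m)
    by_cases hX : 1 ≤ a₀ r.1
    · set a₁ := applyRule a₀ r with ha₁
      have heq' : c 1 = applyRule (c 0) r := by simpa using heq
      have h1 : a₁ ≤ c 1 := by
        intro Y
        have hh : a₀ Y ≤ c 0 Y := h0 Y
        simp only [ha₁, heq', applyRule]
        split_ifs <;> omega
      obtain ⟨m', hm', d, hd0, hdstep, hdav, hdend⟩ :=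
        ih (fun ℓ => c (ℓ + 1)) a₁ h1
          (fun ℓ hℓ => hstep (ℓ + 1) (by omega))
          (fun ℓ hℓ => hav (ℓ + 1) (by omega))
      refine ⟨m' + 1, by omega, fun ℓ => if ℓ = 0 then a₀ else d (ℓ - 1), rfl, ?_, ?_, ?_⟩
      · intro ℓ hℓ
        rcases Nat.eq_zero_or_pos ℓ with h | h
        · subst h
          simp only [if_pos rfl, if_neg one_ne_zero]
          rw [show (1:ℕ) - 1 = 0 from rfl, hd0]
          exact ⟨r, hr, hX, rfl⟩
        · have h1 : ℓ ≠ 0 := by omega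
          have h2 : ℓ + 1 ≠ 0 := by omega
          simp only [if_neg h1, if_neg h2]
          have : ℓ + 1 - 1 = (ℓ - 1) + 1 := by omega
          rw [this]
          exact hdstep (ℓ - 1) (by omega)
      · intro ℓ hℓ
        rcases Nat.eq_zero_or_pos ℓ with h | h
        · subst h
          simp only [if_pos rfl]
          exact fun h => hav 0 (by omega) (hF _ h _ h0)
        · simp only [if_neg (by omega : ℓ ≠ 0)]
          exact hdav (ℓ - 1) (by omega)
      · simp only [if_neg (by omega : m' + 1 ≠ 0)]
        simpa using hdend
    · have h1 : a₀ ≤ c 1 := by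
        intro Y
        have hh : a₀ Y ≤ c 0 Y := h0 Y
        by_cases hY : Y = r.1
        · subst hY; simp only [heq, applyRule, if_pos rfl]; omega
        · simp only [heq, applyRule, if_neg hY]; omega
      obtain ⟨m', hm', d, hd⟩ :=
        ih (fun ℓ => c (ℓ + 1)) a₀ h1
          (fun ℓ hℓ => hstep (ℓ + 1) (by omega))
          (fun ℓ hℓ => hav (ℓ + 1) (by omega))
      exact ⟨m', by omega, d, hd⟩

/-- On a shortest path through the complement of an upward-closed set `F`
ending below `γ`, no configuration is dominated by a later one. -/
theorem shortest_path_antichain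
    (rules : Finset (Γ × (Γ → ℕ))) (F : Set (Γ → ℕ))
    (hF : ∀ α ∈ F, ∀ β, α ≤ β → β ∈ F)
    (γ : Γ → ℕ) (k : ℕ) (α : ℕ → (Γ → ℕ))
    (h0 : α 0 ∉ F)
    (hstep : ∀ ℓ < k, Step rules (α ℓ) (α (ℓ + 1)))
    (havoid : ∀ ℓ ≤ k, α ℓ ∉ F)
    (hend : α k ≤ γ)
    (hshortest : ∀ k' : ℕ, ∀ α' : ℕ → (Γ → ℕ),
      α' 0 = α 0 →
      (∀ ℓ < k', Step rules (α' ℓ) (α' (ℓ + 1))) →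
      (∀ ℓ ≤ k', α' ℓ ∉ F) →
      α' k' ≤ γ → k ≤ k') :
    ∀ i j, i < j → j ≤ k → ¬ α i ≤ α j := by
  intro i j hij hjk hle
  obtain ⟨m', hm', d, hd0, hdstep, hdav, hdend⟩ :=
    key_sim rules F hF (k - j) (fun ℓ => α (j + ℓ)) (α i)
      (by simpa using hle)
      (fun ℓ hℓ => by
        have := hstep (j + ℓ) (by omega)
        simpa [Nat.add_assoc] using this)
      (fun ℓ hℓ => havoid (j + ℓ) (by omega))
  have hend' : d m' ≤ γ := by
    have : j + (k - j) = k := by omega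
    rw [this] at hdend
    exact le_trans hdend hend
  set α' : ℕ → (Γ → ℕ) := fun ℓ => if ℓ < i then α ℓ else d (ℓ - i) with hα'
  have h0' : α' 0 = α 0 := by
    rcases Nat.eq_zero_or_pos i with h | h
    · subst h; simp [hα', hd0]
    · simp [hα', h]
  have hstep' : ∀ ℓ < i + m', Step rules (α' ℓ) (α' (ℓ + 1)) := by
    intro ℓ hℓ
    by_cases h : ℓ < i
    · rcases Nat.lt_or_ge (ℓ + 1) i with h2 | h2
      · simpa [hα', h, h2] using hstep ℓ (by omega)
      · have h3 : ℓ + 1 = i := by omega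
        have h4 : ¬ (ℓ + 1 < i) := by omega
        simp only [hα', if_pos h, if_neg h4, h3, Nat.sub_self, hd0]
        simpa [← h3] using hstep ℓ (by omega)
    · have h2 : ¬ (ℓ + 1 < i) := by omega
      have h3 : ℓ + 1 - i = (ℓ - i) + 1 := by omega
      simp only [hα', if_neg h, if_neg h2, h3]
      exact hdstep (ℓ - i) (by omega)
  have hav' : ∀ ℓ ≤ i + m', α' ℓ ∉ F := by
    intro ℓ hℓ
    by_cases h : ℓ < i
    · simpa [hα', h] using havoid ℓ (by omega)
    · simp only [hα', if_neg h]
      exact hdav (ℓ - i) (by omega)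
  have hend'' : α' (i + m') ≤ γ := by
    have h : ¬ (i + m' < i) := by omega
    simp only [hα', if_neg h, Nat.add_sub_cancel_left]
    exact hend'
  have := hshortest (i + m') α' h0' hstep' hav' hend''
  omega
end

section
/- Let M = (Q, δ) be a countable Markov chain that is globally coarse with respect to F ⊆ Q, i.e., there is c > 0 such that for all s, ℙ(s ⊨ ◇F) > 0 implies ℙ(s ⊨ ◇F) ≥ c. Let Z = {s ∈ Q : ℙ(s ⊨ ◇F) = 0}. Then for every state s_0: ℙ(s_0 ⊨ ◇F) = 1 if and only if there is no finite path from s_0 to Z that avoids F, i.e., ℙ(s_0 ⊨ F̄ U Z) = 0, where F̄ = Q \ F. -/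
/-- Probability, in the countable Markov chain with transition function `δ`,
of hitting the set `F` within `n` steps, starting from a given state. -/
noncomputable def hitWithin {Q : Type*} (δ : Q → Q → ℝ) (F : Q → Prop)
    [DecidablePred F] : ℕ → Q → ℝ
  | 0, s => if F s then 1 else 0
  | n + 1, s => if F s then 1 else ∑' t, δ s t * hitWithin δ F n t


section Aux
variable {Q : Type*} [Countable Q] {δ : Q → Q → ℝ} (hpos : ∀ s t, 0 ≤ δ s t)
  (hsum : ∀ s, ∑' t, δ s t = 1) (F : Q → Prop) [DecidablePred F]

set_option linter.unusedSectionVars false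

include hpos hsum

lemma summable_delta (s : Q) : Summable (δ s) := by
  by_contra h
  have := tsum_eq_zero_of_not_summable h
  rw [hsum s] at this; norm_num at this

lemma summable_mul (s : Q) (x : Q → ℝ) (h0 : ∀ t, 0 ≤ x t) (h1 : ∀ t, x t ≤ 1) :
    Summable (fun t => δ s t * x t) :=
  Summable.of_nonneg_of_le (fun t => mul_nonneg (hpos s t) (h0 t))
    (fun t => mul_le_of_le_one_right (hpos s t) (h1 t)) (summable_delta hpos hsum s)

lemma hit_nonneg : ∀ n s, 0 ≤ hitWithin δ F n s := by
  intro n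
  induction n with
  | zero => intro s; simp only [hitWithin]; split <;> norm_num
  | succ n ih =>
    intro s; simp only [hitWithin]; split
    · norm_num
    · exact tsum_nonneg fun t => mul_nonneg (hpos s t) (ih t)

lemma hit_le_one : ∀ n s, hitWithin δ F n s ≤ 1 := by
  intro n
  induction n with
  | zero => intro s; simp only [hitWithin]; split <;> norm_num
  | succ n ih =>
    intro s; simp only [hitWithin]; split
    · norm_num
    · calc ∑' t, δ s t * hitWithin δ F n t ≤ ∑' t, δ s t := by
            refine Summable.tsum_le_tsum (fun t => mul_le_of_le_one_right (hpos s t) (ih t))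
              (summable_mul hpos hsum s _ (hit_nonneg hpos hsum F n) ih) (summable_delta hpos hsum s)
        _ = 1 := hsum s

lemma hit_mono (s : Q) : Monotone (fun n => hitWithin δ F n s) := by
  have key : ∀ n s, hitWithin δ F n s ≤ hitWithin δ F (n + 1) s := by
    intro n
    induction n with
    | zero =>
      intro s; simp only [hitWithin]; split
      · norm_num
      · exact tsum_nonneg fun t => mul_nonneg (hpos s t) (hit_nonneg hpos hsum F 0 t)
    | succ n ih =>
      intro s; simp only [hitWithin]; split
      · norm_num
      · exact Summable.tsum_le_tsum (fun t => mul_le_mul_of_nonneg_left (ih t) (hpos s t))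
          (summable_mul hpos hsum s _ (hit_nonneg hpos hsum F n) (hit_le_one hpos hsum F n))
          (summable_mul hpos hsum s _ (hit_nonneg hpos hsum F (n+1)) (hit_le_one hpos hsum F (n+1)))
  exact monotone_nat_of_le_succ fun n => key n s

lemma hit_bdd (s : Q) : BddAbove (Set.range fun n => hitWithin δ F n s) :=
  ⟨1, by rintro _ ⟨n, rfl⟩; exact hit_le_one hpos hsum F n s⟩

lemma le_H (n : ℕ) (s : Q) : hitWithin δ F n s ≤ ⨆ m, hitWithin δ F m s :=
  le_ciSup (hit_bdd hpos hsum F s) n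

lemma H_le_one (s : Q) : (⨆ n, hitWithin δ F n s) ≤ 1 :=
  ciSup_le fun n => hit_le_one hpos hsum F n s

lemma H_nonneg (s : Q) : 0 ≤ ⨆ n, hitWithin δ F n s :=
  (hit_nonneg hpos hsum F 0 s).trans (le_H hpos hsum F 0 s)

lemma H_of_F {s : Q} (hF : F s) : (⨆ n, hitWithin δ F n s) = 1 := by
  refine le_antisymm (H_le_one hpos hsum F s) ?_
  have : hitWithin δ F 0 s = 1 := by simp [hitWithin, hF]
  rw [← this]; exact le_H hpos hsum F 0 s

lemma hit_tendsto (s : Q) :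
    Filter.Tendsto (fun n => hitWithin δ F n s) Filter.atTop
      (nhds (⨆ n, hitWithin δ F n s)) :=
  tendsto_atTop_ciSup (hit_mono hpos hsum F s) (hit_bdd hpos hsum F s)

lemma fixedpoint_ge {s : Q} (hF : ¬ F s) :
    (∑' t, δ s t * ⨆ n, hitWithin δ F n t) ≤ ⨆ n, hitWithin δ F n s := by
  refine Summable.tsum_le_of_sum_le (summable_mul hpos hsum s _
    (H_nonneg hpos hsum F) (H_le_one hpos hsum F)) fun S => ?_
  have lim : Filter.Tendsto (fun n => ∑ t ∈ S, δ s t * hitWithin δ F n t) Filter.atTop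
      (nhds (∑ t ∈ S, δ s t * ⨆ n, hitWithin δ F n t)) :=
    tendsto_finset_sum _ fun t _ => (hit_tendsto hpos hsum F t).const_mul _
  refine le_of_tendsto lim (Filter.Eventually.of_forall fun n => ?_)
  calc ∑ t ∈ S, δ s t * hitWithin δ F n t ≤ ∑' t, δ s t * hitWithin δ F n t :=
        Summable.sum_le_tsum S (fun t _ => mul_nonneg (hpos s t) (hit_nonneg hpos hsum F n t))
          (summable_mul hpos hsum s _ (hit_nonneg hpos hsum F n) (hit_le_one hpos hsum F n))
    _ = hitWithin δ F (n + 1) s := by simp [hitWithin, hF]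
    _ ≤ _ := le_H hpos hsum F (n + 1) s

end Aux

section Aux2
variable {Q : Type*} [Countable Q] {δ : Q → Q → ℝ} (hpos : ∀ s t, 0 ≤ δ s t)
  (hsum : ∀ s, ∑' t, δ s t = 1) (F : Q → Prop) [DecidablePred F]

set_option linter.unusedSectionVars false

include hpos hsum

lemma delta_le_one (s t : Q) : δ s t ≤ 1 := by
  rw [← hsum s]
  exact Summable.le_tsum (summable_delta hpos hsum s) t fun u _ => hpos s u

lemma H_lt_one_step {s t : Q} (hF : ¬ F s) (hδ : 0 < δ s t)
    (ht : (⨆ n, hitWithin δ F n t) < 1) : (⨆ n, hitWithin δ F n s) < 1 := by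
  classical
  set Ht := ⨆ n, hitWithin δ F n t with hHt
  have hHt0 : 0 ≤ Ht := H_nonneg hpos hsum F t
  have hd1 : δ s t ≤ 1 := delta_le_one hpos hsum s t
  have key : ∀ n, hitWithin δ F n s ≤ 1 - δ s t * (1 - Ht) := by
    intro n
    cases n with
    | zero =>
      simp only [hitWithin, hF, if_false]
      nlinarith
    | succ n =>
      simp only [hitWithin, hF, if_false]
      have sum1 : Summable (δ s) := summable_delta hpos hsum s
      have sum2 : Summable (fun u => if u = t then δ s t * (1 - Ht) else 0) :=
        summable_of_ne_finset_zero (s := {t}) (by intro u hu; simp at hu; simp [hu])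
      have hpt : ∀ u, δ s u * hitWithin δ F n u ≤
          δ s u - (if u = t then δ s t * (1 - Ht) else 0) := by
        intro u
        by_cases hu : u = t
        · subst hu
          simp only [eq_self_iff_true, if_true]
          have : hitWithin δ F n u ≤ Ht := le_H hpos hsum F n u
          nlinarith [hpos s u]
        · simp only [if_neg hu, sub_zero]
          exact mul_le_of_le_one_right (hpos s u) (hit_le_one hpos hsum F n u)
      calc (∑' u, δ s u * hitWithin δ F n u)
          ≤ ∑' u, (δ s u - if u = t then δ s t * (1 - Ht) else 0) :=
            Summable.tsum_le_tsum hpt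
              (summable_mul hpos hsum s _ (hit_nonneg hpos hsum F n) (hit_le_one hpos hsum F n))
              (sum1.sub sum2)
        _ = (∑' u, δ s u) - ∑' u, (if u = t then δ s t * (1 - Ht) else 0) :=
            Summable.tsum_sub sum1 sum2
        _ = 1 - δ s t * (1 - Ht) := by rw [hsum s, tsum_ite_eq]
  have h1 : (⨆ n, hitWithin δ F n s) ≤ 1 - δ s t * (1 - Ht) := ciSup_le key
  nlinarith

end Aux2

/-- Reachability from `s₀` by a finite path with positive transition
probabilities whose states (except possibly the last) avoid `F`. -/
def ReachAvoid {Q : Type*} (δ : Q → Q → ℝ) (F : Q → Prop) (s₀ s : Q) : Prop :=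
  ∃ k, ∃ p : ℕ → Q, p 0 = s₀ ∧ (∀ i < k, 0 < δ (p i) (p (i + 1))) ∧
    (∀ i < k, ¬ F (p i)) ∧ p k = s

lemma reachAvoid_self {Q : Type*} (δ : Q → Q → ℝ) (F : Q → Prop) (s₀ : Q) :
    ReachAvoid δ F s₀ s₀ :=
  ⟨0, fun _ => s₀, rfl, fun i hi => absurd hi (by omega),
    fun i hi => absurd hi (by omega), rfl⟩

lemma reachAvoid_extend {Q : Type*} {δ : Q → Q → ℝ} {F : Q → Prop} {s₀ s t : Q}
    (h : ReachAvoid δ F s₀ s) (hF : ¬ F s) (hδ : 0 < δ s t) :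
    ReachAvoid δ F s₀ t := by
  classical
  obtain ⟨k, p, hp0, htr, hFp, hpk⟩ := h
  set q : ℕ → Q := fun i => if i ≤ k then p i else t with hq
  have hqi : ∀ i, i ≤ k → q i = p i := fun i hi => if_pos hi
  have hqk : q (k + 1) = t := if_neg (by omega)
  refine ⟨k + 1, q, by rw [hqi 0 (by omega), hp0], ?_, ?_, hqk⟩
  · intro i hi
    rcases lt_or_eq_of_le (Nat.lt_succ_iff.mp hi) with hik | hik
    · rw [hqi i hik.le, hqi (i + 1) hik]
      exact htr i hik
    · subst hik
      rw [hqi i le_rfl, hqk, hpk]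
      exact hδ
  · intro i hi
    rcases lt_or_eq_of_le (Nat.lt_succ_iff.mp hi) with hik | hik
    · rw [hqi i hik.le]; exact hFp i hik
    · subst hik; rw [hqi i le_rfl, hpk]; exact hF

/-- In a globally coarse countable Markov chain, hitting `F` from `s₀` is
almost sure iff there is no finite path from `s₀` avoiding `F` to the set
`Z` of states from which `F` is hit with probability `0`
(i.e. `ℙ(s₀ ⊨ F̄ U Z) = 0`). -/
theorem globally_coarse_almost_sure_iff {Q : Type*} [Countable Q]
    (δ : Q → Q → ℝ) (hpos : ∀ s t, 0 ≤ δ s t) (hsum : ∀ s, ∑' t, δ s t = 1)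
    (F : Q → Prop) [DecidablePred F]
    (c : ℝ) (hc : 0 < c)
    (hcoarse : ∀ s, 0 < (⨆ n, hitWithin δ F n s) → c ≤ ⨆ n, hitWithin δ F n s)
    (s₀ : Q) :
    (⨆ n, hitWithin δ F n s₀) = 1 ↔
      ¬ ∃ k, ∃ s : ℕ → Q, s 0 = s₀ ∧
        (∀ i < k, 0 < δ (s i) (s (i + 1))) ∧
        (∀ i < k, ¬ F (s i)) ∧
        (⨆ n, hitWithin δ F n (s k)) = 0 := by
  constructor
  · -- if almost sure, no avoiding path to Z
    rintro h1 ⟨k, p, hp0, htr, hFp, hZ⟩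
    have key : ∀ j, j ≤ k → (⨆ n, hitWithin δ F n (p (k - j))) < 1 := by
      intro j
      induction j with
      | zero => intro _; rw [Nat.sub_zero, hZ]; exact one_pos
      | succ j ih =>
        intro hj
        have hlt : k - (j + 1) < k := by omega
        have hstep : k - (j + 1) + 1 = k - j := by omega
        have hprev : (⨆ n, hitWithin δ F n (p (k - (j + 1) + 1))) < 1 := by
          rw [hstep]; exact ih (by omega)
        exact H_lt_one_step hpos hsum F (hFp _ hlt) (htr _ hlt) hprev
    have := key k le_rfl
    rw [Nat.sub_self, hp0, h1] at this
    exact lt_irrefl 1 this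
  · -- if no avoiding path to Z, almost sure
    intro hW
    have hreach : ∀ s, ReachAvoid δ F s₀ s → 0 < ⨆ n, hitWithin δ F n s := by
      intro s hs
      rcases lt_or_eq_of_le (H_nonneg hpos hsum F s) with h | h
      · exact h
      · exfalso
        obtain ⟨k, p, hp0, htr, hFp, hpk⟩ := hs
        exact hW ⟨k, p, hp0, htr, hFp, by rw [hpk, ← h]⟩
    have hcR : ∀ s, ReachAvoid δ F s₀ s → c ≤ ⨆ n, hitWithin δ F n s :=
      fun s hs => hcoarse s (hreach s hs)
    have hc1 : c ≤ 1 :=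
      (hcR s₀ (reachAvoid_self δ F s₀)).trans (H_le_one hpos hsum F s₀)
    -- main inductive claim
    have claim : ∀ n, ∀ s, ReachAvoid δ F s₀ s →
        c + (1 - c) * hitWithin δ F n s ≤ ⨆ m, hitWithin δ F m s := by
      intro n
      induction n with
      | zero =>
        intro s hs
        by_cases hF : F s
        · rw [H_of_F hpos hsum F hF]
          simp only [hitWithin, hF, if_true]
          nlinarith
        · simp only [hitWithin, hF, if_false]
          rw [mul_zero, add_zero]
          exact hcR s hs
      | succ n ih =>
        intro s hs
        by_cases hF : F s
        · rw [H_of_F hpos hsum F hF]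
          nlinarith [hit_le_one hpos hsum F (n + 1) s, hit_nonneg hpos hsum F (n + 1) s]
        · simp only [hitWithin, hF, if_false]
          have hx0 : ∀ t, (0:ℝ) ≤ c + (1 - c) * hitWithin δ F n t := by
            intro t; nlinarith [hit_nonneg hpos hsum F n t, hit_le_one hpos hsum F n t]
          have hx1 : ∀ t, c + (1 - c) * hitWithin δ F n t ≤ 1 := by
            intro t; nlinarith [hit_le_one hpos hsum F n t, hit_nonneg hpos hsum F n t]
          have sumA : Summable (fun t => δ s t * (c + (1 - c) * hitWithin δ F n t)) :=
            summable_mul hpos hsum s _ hx0 hx1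
          have sumB : Summable (fun t => δ s t * hitWithin δ F n t) :=
            summable_mul hpos hsum s _ (hit_nonneg hpos hsum F n) (hit_le_one hpos hsum F n)
          have sumH : Summable (fun t => δ s t * ⨆ m, hitWithin δ F m t) :=
            summable_mul hpos hsum s _ (H_nonneg hpos hsum F) (H_le_one hpos hsum F)
          have expand : c + (1 - c) * ∑' t, δ s t * hitWithin δ F n t
              = ∑' t, δ s t * (c + (1 - c) * hitWithin δ F n t) := by
            have : ∀ t, δ s t * (c + (1 - c) * hitWithin δ F n t)
                = c * δ s t + (1 - c) * (δ s t * hitWithin δ F n t) := by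
              intro t; ring
            rw [tsum_congr this, Summable.tsum_add ((summable_delta hpos hsum s).mul_left c)
              (sumB.mul_left (1 - c)), tsum_mul_left, tsum_mul_left, hsum s]
            ring
          rw [expand]
          calc (∑' t, δ s t * (c + (1 - c) * hitWithin δ F n t))
              ≤ ∑' t, δ s t * ⨆ m, hitWithin δ F m t := by
                refine Summable.tsum_le_tsum (fun t => ?_) sumA sumH
                rcases lt_or_eq_of_le (hpos s t) with hd | hd
                · have ht : ReachAvoid δ F s₀ t := reachAvoid_extend hs hF hd
                  exact mul_le_mul_of_nonneg_left (ih t ht) (hpos s t)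
                · rw [← hd, zero_mul, zero_mul]
            _ ≤ ⨆ m, hitWithin δ F m s := fixedpoint_ge hpos hsum F hF
    -- conclude
    set H0 := ⨆ n, hitWithin δ F n s₀ with hH0
    have hkey : ∀ y, y < H0 → c + (1 - c) * y ≤ H0 := by
      intro y hy
      obtain ⟨n, hn⟩ := exists_lt_of_lt_ciSup hy
      have := claim n s₀ (reachAvoid_self δ F s₀)
      nlinarith [mul_le_mul_of_nonneg_left hn.le (by linarith : (0:ℝ) ≤ 1 - c)]
    have hle : H0 ≤ 1 := H_le_one hpos hsum F s₀
    by_contra hne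
    have hlt : H0 < 1 := lt_of_le_of_ne hle hne
    have hy : H0 - c * (1 - H0) / 2 < H0 := by nlinarith
    have := hkey _ hy
    nlinarith
end

section
/- Let Γ be finite, → the BPP step relation on ℕ^Γ, and F = ∪_{X∈Q} X↑ a Q-states upward-closed set for some Q ⊆ Γ (configurations containing at least one process of some type in Q). Let Q' ⊆ Γ be the set of types X such that some configuration in F is reachable from the single-process configuration X. Then for any configuration α, some configuration in F is reachable from α if and only if α(X) ≥ 1 for some X ∈ Q'. -/
variable {Γ : Type*} [Fintype Γ] [DecidableEq Γ]

/-- Unit configuration: a single process of type `X`. -/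
def unit (X : Γ) : Γ → ℕ := fun Y => if Y = X then 1 else 0

lemma step_add (rules : Finset (Γ × (Γ → ℕ))) {β γ : Γ → ℕ} (δ : Γ → ℕ)
    (h : Step rules β γ) :
    Step rules (fun Y => β Y + δ Y) (fun Y => γ Y + δ Y) := by
  obtain ⟨r, hr, h1, rfl⟩ := h
  refine ⟨r, hr, le_trans h1 (Nat.le_add_right _ _), ?_⟩
  funext Y
  simp only [applyRule]
  by_cases hY : Y = r.1 <;> simp only [hY, if_true, if_false] <;> subst_vars <;> omega

lemma reach_add (rules : Finset (Γ × (Γ → ℕ))) {β γ : Γ → ℕ} (δ : Γ → ℕ)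
    (h : Relation.ReflTransGen (Step rules) β γ) :
    Relation.ReflTransGen (Step rules) (fun Y => β Y + δ Y) (fun Y => γ Y + δ Y) := by
  induction h with
  | refl => exact .refl
  | tail _ hstep ih => exact ih.tail (step_add rules δ hstep)

/-- For a `Q`-states target set `F` (configurations with at least one process
of a type in `Q`), letting `Q'` be the set of types from which (as single
processes) `F` is reachable, a configuration `α` can reach `F` iff `α` has a
process of some type in `Q'`. -/
theorem q_states_reachability
    (rules : Finset (Γ × (Γ → ℕ))) (Q : Set Γ)
    (F : Set (Γ → ℕ)) (hF : F = {β | ∃ X ∈ Q, 1 ≤ β X})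
    (Q' : Set Γ)
    (hQ' : Q' = {X | ∃ γ, Relation.ReflTransGen (Step rules) (unit X) γ ∧ γ ∈ F})
    (α : Γ → ℕ) :
    (∃ γ, Relation.ReflTransGen (Step rules) α γ ∧ γ ∈ F) ↔
      ∃ X ∈ Q', 1 ≤ α X := by
  subst hF hQ'
  constructor
  · rintro ⟨γ, hreach, hγ⟩
    induction hreach using Relation.ReflTransGen.head_induction_on with
    | refl =>
      obtain ⟨X, hXQ, hX⟩ := hγ
      refine ⟨X, ⟨unit X, .refl, X, hXQ, by simp [unit]⟩, hX⟩
    | head hstep _ ih =>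
      rename_i a b _
      obtain ⟨X, hXQ', hX⟩ := ih
      by_cases hA : 1 ≤ a X
      · exact ⟨X, hXQ', hA⟩
      · obtain ⟨r, hr, hr1, rfl⟩ := hstep
        -- a X = 0, applyRule a r X ≥ 1, so r.2 X ≥ 1
        have hr2 : 1 ≤ r.2 X := by
          simp only [applyRule] at hX; omega
        refine ⟨r.1, ?_, hr1⟩
        -- unit r.1 steps to something ≥ unit X, which reaches F
        obtain ⟨γ', hγ'reach, Y, hYQ, hY⟩ := hXQ'
        have hstep1 : Step rules (unit r.1) (applyRule (unit r.1) r) :=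
          ⟨r, hr, by simp [unit], rfl⟩
        set β := applyRule (unit r.1) r with hβ
        have hβX : 1 ≤ β X := by
          simp only [hβ, applyRule, unit]
          by_cases h : X = r.1
          · subst h; simp; omega
          · simp [h]; omega
        have hdec : β = fun Z => unit X Z + (β Z - unit X Z) := by
          funext Z
          by_cases h : Z = X <;> simp [unit, h] <;> omega
        have h2 := reach_add rules (fun Z => β Z - unit X Z) hγ'reach
        rw [← hdec] at h2
        refine ⟨_, Relation.ReflTransGen.head hstep1 h2,
          Y, hYQ, le_trans hY (Nat.le_add_right _ _)⟩
  · rintro ⟨X, ⟨γ, hreach, Y, hYQ, hY⟩, hX⟩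
    have hdec : α = fun Z => unit X Z + (α Z - unit X Z) := by
      funext Z
      by_cases h : Z = X <;> simp [unit, h] <;> omega
    have h2 := reach_add rules (fun Z => α Z - unit X Z) hreach
    rw [← hdec] at h2
    exact ⟨_, h2, Y, hYQ, le_trans hY (Nat.le_add_right _ _)⟩
end

section
/- In a finite-state MDP, if from state s there exists a scheduler reaching a target set F with probability 1, then there exists a deterministic memoryless scheduler reaching F from s with probability 1. -/
set_option linter.unusedSectionVars false

variable {Q A : Type*} [Fintype Q] [Fintype A] [DecidableEq A]

/-- Probability of hitting `F` within `n` steps in the finite MDP with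
transition probabilities `δ`, under the (history-dependent, randomized)
scheduler `σ`, starting from history `h` and current state `s`. -/
noncomputable def mdpHitWithin (δ : Q → A → Q → ℝ) (F : Q → Prop)
    [DecidablePred F] (σ : List (Q × A) → Q → A → ℝ) :
    ℕ → List (Q × A) → Q → ℝ
  | 0, _, s => if F s then 1 else 0
  | n + 1, h, s => if F s then 1 else
      ∑ a, σ h s a * ∑ t, δ s a t * mdpHitWithin δ F σ n (h ++ [(s, a)]) t

/-- `σ` is a valid scheduler for enabledness function `En`. -/
def IsScheduler (En : Q → Finset A) (σ : List (Q × A) → Q → A → ℝ) : Prop :=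
  ∀ h s, (∀ a, 0 ≤ σ h s a) ∧ (∀ a, a ∉ En s → σ h s a = 0) ∧
    ∑ a ∈ En s, σ h s a = 1

section Aux

variable (En : Q → Finset A) (δ : Q → A → Q → ℝ) (F : Q → Prop) [DecidablePred F]

lemma hit_nonneg_s16 (σ : List (Q × A) → Q → A → ℝ) (hσ : ∀ h s a, 0 ≤ σ h s a)
    (hδpos : ∀ s a t, 0 ≤ δ s a t) :
    ∀ n h s, 0 ≤ mdpHitWithin δ F σ n h s := by
  intro n
  induction n with
  | zero => intro h s; simp only [mdpHitWithin]; positivity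
  | succ n ih =>
    intro h s
    simp only [mdpHitWithin]
    split
    · norm_num
    · refine Finset.sum_nonneg fun a _ => mul_nonneg (hσ h s a) ?_
      exact Finset.sum_nonneg fun t _ => mul_nonneg (hδpos s a t) (ih _ t)

lemma hit_le_one_s16 (σ : List (Q × A) → Q → A → ℝ) (hσ : IsScheduler En σ)
    (hδpos : ∀ s a t, 0 ≤ δ s a t) (hδsum : ∀ s, ∀ a ∈ En s, ∑ t, δ s a t = 1) :
    ∀ n h s, mdpHitWithin δ F σ n h s ≤ 1 := by
  intro n
  induction n with
  | zero => intro h s; simp only [mdpHitWithin]; split <;> norm_num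
  | succ n ih =>
    intro h s
    simp only [mdpHitWithin]
    split
    · exact le_refl 1
    · calc ∑ a, σ h s a * ∑ t, δ s a t * mdpHitWithin δ F σ n (h ++ [(s, a)]) t
          = ∑ a ∈ En s, σ h s a * ∑ t, δ s a t * mdpHitWithin δ F σ n (h ++ [(s, a)]) t := by
            refine (Finset.sum_subset (Finset.subset_univ (En s)) ?_).symm
            intro a _ ha
            rw [(hσ h s).2.1 a ha, zero_mul]
        _ ≤ ∑ a ∈ En s, σ h s a * 1 := by
            refine Finset.sum_le_sum fun a haa => ?_
            refine mul_le_mul_of_nonneg_left ?_ ((hσ h s).1 a)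
            calc ∑ t, δ s a t * mdpHitWithin δ F σ n (h ++ [(s, a)]) t
                ≤ ∑ t, δ s a t * 1 := by
                  refine Finset.sum_le_sum fun t _ => ?_
                  exact mul_le_mul_of_nonneg_left (ih _ t) (hδpos s a t)
              _ = 1 := by simp [hδsum s a haa]
        _ = 1 := by simp [(hσ h s).2.2]

lemma hit_mono_s16 (σ : List (Q × A) → Q → A → ℝ) (hσ : ∀ h s a, 0 ≤ σ h s a)
    (hδpos : ∀ s a t, 0 ≤ δ s a t) :
    ∀ n h s, mdpHitWithin δ F σ n h s ≤ mdpHitWithin δ F σ (n + 1) h s := by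
  intro n
  induction n with
  | zero =>
    intro h s
    simp only [mdpHitWithin]
    split
    · exact le_refl 1
    · refine Finset.sum_nonneg fun a _ => mul_nonneg (hσ h s a) ?_
      refine Finset.sum_nonneg fun t _ => mul_nonneg (hδpos s a t) ?_
      exact hit_nonneg_s16 δ F σ hσ hδpos 0 (h ++ [(s, a)]) t
  | succ n ih =>
    intro h s
    simp only [mdpHitWithin]
    split
    · exact le_refl 1
    · refine Finset.sum_le_sum fun a _ => ?_
      refine mul_le_mul_of_nonneg_left ?_ (hσ h s a)
      refine Finset.sum_le_sum fun t _ => ?_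
      exact mul_le_mul_of_nonneg_left (ih _ t) (hδpos s a t)

lemma hit_shift (σ : List (Q × A) → Q → A → ℝ) :
    ∀ n p h s, mdpHitWithin δ F σ n (p ++ h) s
      = mdpHitWithin δ F (fun h' => σ (p ++ h')) n h s := by
  intro n
  induction n with
  | zero => intro p h s; simp [mdpHitWithin]
  | succ n ih =>
    intro p h s
    simp only [mdpHitWithin]
    split
    · rfl
    · refine Finset.sum_congr rfl fun a _ => ?_
      congr 1
      refine Finset.sum_congr rfl fun t _ => ?_
      congr 1
      rw [List.append_assoc]
      exact ih p (h ++ [(s, a)]) t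

end Aux

section Val

variable (En : Q → Finset A) (δ : Q → A → Q → ℝ) (F : Q → Prop) [DecidablePred F]

/-- The set of values achievable by schedulers from `u`. -/
def ValSet (u : Q) : Set ℝ :=
  {x | ∃ σ, IsScheduler En σ ∧ x = ⨆ n, mdpHitWithin δ F σ n [] u}

/-- The optimal reachability value from `u`. -/
noncomputable def Val (u : Q) : ℝ := sSup (ValSet En δ F u)

lemma isScheduler_det (f : Q → A) (hf : ∀ u, f u ∈ En u) :
    IsScheduler En (fun (_ : List (Q × A)) u a => if a = f u then 1 else 0) := by
  intro h s
  refine ⟨fun a => by positivity, fun a ha => ?_, ?_⟩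
  · show (if a = f s then (1:ℝ) else 0) = 0
    rw [if_neg]; rintro rfl; exact ha (hf s)
  · rw [Finset.sum_ite_eq' (En s) (f s) (fun _ => (1:ℝ))]
    simp [hf s]

lemma valSet_nonempty (hEn : ∀ s, (En s).Nonempty) (u : Q) : (ValSet En δ F u).Nonempty := by
  classical
  refine ⟨_, ⟨fun _ u a => if a = (hEn u).choose then 1 else 0,
    isScheduler_det En (fun u => (hEn u).choose) (fun u => (hEn u).choose_spec), rfl⟩⟩

lemma valSet_le_one (hδpos : ∀ s a t, 0 ≤ δ s a t)
    (hδsum : ∀ s, ∀ a ∈ En s, ∑ t, δ s a t = 1) :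
    ∀ u, ∀ x ∈ ValSet En δ F u, x ≤ 1 := by
  rintro u x ⟨σ, hσ, rfl⟩
  exact ciSup_le fun n => hit_le_one_s16 En δ F σ hσ hδpos hδsum n [] u

lemma valSet_bddAbove (hδpos : ∀ s a t, 0 ≤ δ s a t)
    (hδsum : ∀ s, ∀ a ∈ En s, ∑ t, δ s a t = 1) (u : Q) :
    BddAbove (ValSet En δ F u) :=
  ⟨1, fun x hx => valSet_le_one En δ F hδpos hδsum u x hx⟩

lemma bddAbove_range_hit (σ : List (Q × A) → Q → A → ℝ) (hσ : IsScheduler En σ)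
    (hδpos : ∀ s a t, 0 ≤ δ s a t) (hδsum : ∀ s, ∀ a ∈ En s, ∑ t, δ s a t = 1)
    (h : List (Q × A)) (u : Q) :
    BddAbove (Set.range fun n => mdpHitWithin δ F σ n h u) := by
  refine ⟨1, ?_⟩
  rintro x ⟨n, rfl⟩
  exact hit_le_one_s16 En δ F σ hσ hδpos hδsum n h u

lemma Val_le_one (hδpos : ∀ s a t, 0 ≤ δ s a t)
    (hδsum : ∀ s, ∀ a ∈ En s, ∑ t, δ s a t = 1) (hEn : ∀ s, (En s).Nonempty) (u : Q) :
    Val En δ F u ≤ 1 :=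
  csSup_le (valSet_nonempty En δ F hEn u) (valSet_le_one En δ F hδpos hδsum u)

lemma le_Val (hδpos : ∀ s a t, 0 ≤ δ s a t)
    (hδsum : ∀ s, ∀ a ∈ En s, ∑ t, δ s a t = 1)
    (σ : List (Q × A) → Q → A → ℝ) (hσ : IsScheduler En σ) (u : Q) :
    (⨆ n, mdpHitWithin δ F σ n [] u) ≤ Val En δ F u :=
  le_csSup (valSet_bddAbove En δ F hδpos hδsum u) ⟨σ, hσ, rfl⟩

lemma Val_nonneg (hδpos : ∀ s a t, 0 ≤ δ s a t)
    (hδsum : ∀ s, ∀ a ∈ En s, ∑ t, δ s a t = 1) (hEn : ∀ s, (En s).Nonempty) (u : Q) :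
    0 ≤ Val En δ F u := by
  classical
  set σ := fun (_ : List (Q × A)) (u : Q) (a : A) => if a = (hEn u).choose then 1 else (0:ℝ)
  have hσ : IsScheduler En σ :=
    isScheduler_det En (fun u => (hEn u).choose) (fun u => (hEn u).choose_spec)
  refine le_trans ?_ (le_Val En δ F hδpos hδsum σ hσ u)
  refine le_trans (hit_nonneg_s16 δ F σ (fun h s a => (hσ h s).1 a) hδpos 0 [] u) ?_
  exact le_ciSup (bddAbove_range_hit En δ F σ hσ hδpos hδsum [] u) 0

/-- Any hit probability with any history is at most the value of the current state. -/
lemma hit_le_Val (hδpos : ∀ s a t, 0 ≤ δ s a t)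
    (hδsum : ∀ s, ∀ a ∈ En s, ∑ t, δ s a t = 1)
    (σ : List (Q × A) → Q → A → ℝ) (hσ : IsScheduler En σ)
    (n : ℕ) (h : List (Q × A)) (u : Q) :
    mdpHitWithin δ F σ n h u ≤ Val En δ F u := by
  have hσ' : IsScheduler En (fun h' => σ (h ++ h')) := fun h' s => hσ (h ++ h') s
  have e : mdpHitWithin δ F σ n h u
      = mdpHitWithin δ F (fun h' => σ (h ++ h')) n [] u := by
    rw [← hit_shift δ F σ n h [] u, List.append_nil]
  rw [e]
  refine le_trans (le_ciSup (bddAbove_range_hit En δ F _ hσ' hδpos hδsum [] u) n) ?_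
  exact le_Val En δ F hδpos hδsum _ hσ' u

end Val

section Bellman

variable (En : Q → Finset A) (δ : Q → A → Q → ℝ) (F : Q → Prop) [DecidablePred F]

/-- Bellman-type lemma: from a non-target state of value one, some enabled
action leads only to states of value one. -/
lemma bellman (hEn : ∀ s, (En s).Nonempty) (hδpos : ∀ s a t, 0 ≤ δ s a t)
    (hδsum : ∀ s, ∀ a ∈ En s, ∑ t, δ s a t = 1)
    (u : Q) (hu : Val En δ F u = 1) (huF : ¬ F u) :
    ∃ a ∈ En u, ∀ t, δ u a t ≠ 0 → Val En δ F t = 1 := by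
  classical
  set g : A → ℝ := fun a => ∑ t, δ u a t * Val En δ F t with hg
  obtain ⟨a, haEn, hamax⟩ := (En u).exists_max_image g (hEn u)
  -- every achievable value is at most `max 0 (g a)`
  have hbound : ∀ x ∈ ValSet En δ F u, x ≤ max 0 (g a) := by
    rintro x ⟨σ, hσ, rfl⟩
    refine ciSup_le fun n => ?_
    cases n with
    | zero => simp [mdpHitWithin, huF]
    | succ n =>
      refine le_trans ?_ (le_max_right 0 (g a))
      have step : mdpHitWithin δ F σ (n+1) [] u
          = ∑ b, σ [] u b * ∑ t, δ u b t * mdpHitWithin δ F σ n ([] ++ [(u, b)]) t := by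
        simp only [mdpHitWithin, if_neg huF]
      rw [step]
      calc ∑ b, σ [] u b * ∑ t, δ u b t * mdpHitWithin δ F σ n ([] ++ [(u, b)]) t
          = ∑ b ∈ En u, σ [] u b * ∑ t, δ u b t * mdpHitWithin δ F σ n ([] ++ [(u, b)]) t := by
            refine (Finset.sum_subset (Finset.subset_univ (En u)) ?_).symm
            intro b _ hb; rw [(hσ [] u).2.1 b hb, zero_mul]
        _ ≤ ∑ b ∈ En u, σ [] u b * g a := by
            refine Finset.sum_le_sum fun b hb => ?_
            refine mul_le_mul_of_nonneg_left (le_trans ?_ (hamax b hb)) ((hσ [] u).1 b)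
            refine Finset.sum_le_sum fun t _ => ?_
            exact mul_le_mul_of_nonneg_left
              (hit_le_Val En δ F hδpos hδsum σ hσ n ([] ++ [(u, b)]) t) (hδpos u b t)
        _ = g a := by rw [← Finset.sum_mul, (hσ [] u).2.2, one_mul]
  have hVle : Val En δ F u ≤ max 0 (g a) :=
    csSup_le (valSet_nonempty En δ F hEn u) hbound
  have hga1 : 1 ≤ g a := by
    rw [hu] at hVle
    rcases le_max_iff.mp hVle with h | h
    · norm_num at h
    · exact h
  -- conclude all successors have value 1
  refine ⟨a, haEn, fun t ht => ?_⟩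
  have hsum0 : ∑ t, δ u a t * (1 - Val En δ F t) ≤ 0 := by
    have : ∑ t, δ u a t * (1 - Val En δ F t) = 1 - g a := by
      simp only [mul_sub, mul_one, Finset.sum_sub_distrib, hδsum u a haEn, hg]
    rw [this]; linarith
  have hterm : ∀ t ∈ Finset.univ, 0 ≤ δ u a t * (1 - Val En δ F t) := by
    intro t _
    exact mul_nonneg (hδpos u a t)
      (by linarith [Val_le_one En δ F hδpos hδsum hEn t])
  have hz := (Finset.sum_eq_zero_iff_of_nonneg hterm).mp
    (le_antisymm hsum0 (Finset.sum_nonneg hterm))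
  have := hz t (Finset.mem_univ t)
  rcases mul_eq_zero.mp this with h | h
  · exact absurd h ht
  · linarith

end Bellman

section Dset

variable (En : Q → Finset A) (δ : Q → A → Q → ℝ) (F : Q → Prop) [DecidablePred F]

/-- Layers of states from which `F` is reachable inside the value-1 region. -/
def Dset : ℕ → Set Q
  | 0 => {u | Val En δ F u = 1 ∧ F u}
  | n + 1 => Dset n ∪ {u | Val En δ F u = 1 ∧ ∃ a ∈ En u,
      (∀ t, δ u a t ≠ 0 → Val En δ F t = 1) ∧ ∃ t, δ u a t ≠ 0 ∧ t ∈ Dset n}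

lemma Dset_subset_val : ∀ n, ∀ u ∈ Dset En δ F n, Val En δ F u = 1 := by
  intro n
  induction n with
  | zero => intro u hu; exact hu.1
  | succ n ih =>
    intro u hu
    rcases hu with hu | hu
    · exact ih u hu
    · exact hu.1

lemma Dset_mono : ∀ {m n : ℕ}, m ≤ n → Dset En δ F m ⊆ Dset En δ F n := by
  intro m n hmn
  induction n with
  | zero => rw [Nat.le_zero.mp hmn]
  | succ n ih =>
    rcases Nat.lt_or_ge m (n+1) with h | h
    · exact Set.Subset.trans (ih (Nat.lt_succ_iff.mp h)) (Set.subset_union_left)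
    · rw [Nat.le_antisymm hmn h]

end Dset

section DetHit

variable (En : Q → Finset A) (δ : Q → A → Q → ℝ) (F : Q → Prop) [DecidablePred F]

/-- Hitting probability under a deterministic memoryless scheduler. -/
noncomputable def detHit (f : Q → A) : ℕ → Q → ℝ
  | 0, u => if F u then 1 else 0
  | n + 1, u => if F u then 1 else ∑ t, δ u (f u) t * detHit f n t

lemma mdpHitWithin_eq_detHit (f : Q → A) :
    ∀ n h u, mdpHitWithin δ F (fun _ u a => if a = f u then 1 else 0) n h u
      = detHit δ F f n u := by
  intro n
  induction n with
  | zero => intro h u; simp [mdpHitWithin, detHit]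
  | succ n ih =>
    intro h u
    simp only [mdpHitWithin, detHit]
    split
    · rfl
    · have : ∀ b : A, ((if b = f u then (1:ℝ) else 0) *
          ∑ t, δ u b t * mdpHitWithin δ F (fun _ u a => if a = f u then 1 else 0) n (h ++ [(u, b)]) t)
          = (if b = f u then ∑ t, δ u b t * detHit δ F f n t else 0) := by
        intro b
        split
        · rw [one_mul]
          refine Finset.sum_congr rfl fun t _ => by rw [ih]
        · rw [zero_mul]
      rw [Finset.sum_congr rfl fun b _ => this b]
      rw [Finset.sum_ite_eq' Finset.univ (f u) (fun b => ∑ t, δ u b t * detHit δ F f n t)]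
      simp

lemma detHit_of_F (f : Q → A) (u : Q) (hu : F u) : ∀ n, detHit δ F f n u = 1 := by
  intro n; cases n <;> simp [detHit, hu]

lemma detHit_nonneg (hδpos : ∀ s a t, 0 ≤ δ s a t) (f : Q → A) :
    ∀ n u, 0 ≤ detHit δ F f n u := by
  intro n
  induction n with
  | zero => intro u; simp only [detHit]; positivity
  | succ n ih =>
    intro u
    simp only [detHit]
    split
    · norm_num
    · exact Finset.sum_nonneg fun t _ => mul_nonneg (hδpos u (f u) t) (ih t)

lemma detHit_le_one (hδpos : ∀ s a t, 0 ≤ δ s a t)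
    (hδsum : ∀ s, ∀ a ∈ En s, ∑ t, δ s a t = 1)
    (f : Q → A) (hf : ∀ u, f u ∈ En u) :
    ∀ n u, detHit δ F f n u ≤ 1 := by
  intro n
  induction n with
  | zero => intro u; simp only [detHit]; split <;> norm_num
  | succ n ih =>
    intro u
    simp only [detHit]
    split
    · exact le_refl 1
    · calc ∑ t, δ u (f u) t * detHit δ F f n t
          ≤ ∑ t, δ u (f u) t * 1 := by
            exact Finset.sum_le_sum fun t _ => mul_le_mul_of_nonneg_left (ih t) (hδpos u (f u) t)
        _ = 1 := by simp [hδsum u (f u) (hf u)]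

lemma detHit_mono (hδpos : ∀ s a t, 0 ≤ δ s a t) (f : Q → A) :
    ∀ n u, detHit δ F f n u ≤ detHit δ F f (n+1) u := by
  intro n
  induction n with
  | zero =>
    intro u
    simp only [detHit]
    split
    · exact le_refl 1
    · exact Finset.sum_nonneg fun t _ =>
        mul_nonneg (hδpos u (f u) t) (detHit_nonneg δ F hδpos f 0 t)
  | succ n ih =>
    intro u
    simp only [detHit]
    split
    · exact le_refl 1
    · exact Finset.sum_le_sum fun t _ => mul_le_mul_of_nonneg_left (ih t) (hδpos u (f u) t)

lemma detHit_mono' (hδpos : ∀ s a t, 0 ≤ δ s a t) (f : Q → A) {m n : ℕ} (hmn : m ≤ n) :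
    ∀ u, detHit δ F f m u ≤ detHit δ F f n u := by
  intro u
  induction n with
  | zero => rw [Nat.le_zero.mp hmn]
  | succ n ih =>
    rcases Nat.lt_or_ge m (n+1) with h | h
    · exact le_trans (ih (Nat.lt_succ_iff.mp h)) (detHit_mono δ F hδpos f n u)
    · rw [Nat.le_antisymm hmn h]

end DetHit

/-- In a finite-state MDP, if some scheduler reaches `F` from `s` with
probability `1`, then some deterministic memoryless scheduler does. -/
theorem finite_mdp_deterministic_memoryless
    (En : Q → Finset A) (hEn : ∀ s, (En s).Nonempty)
    (δ : Q → A → Q → ℝ)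
    (hδpos : ∀ s a t, 0 ≤ δ s a t)
    (hδsum : ∀ s, ∀ a ∈ En s, ∑ t, δ s a t = 1)
    (F : Q → Prop) [DecidablePred F] (s : Q)
    (hex : ∃ σ, IsScheduler En σ ∧ (⨆ n, mdpHitWithin δ F σ n [] s) = 1) :
    ∃ f : Q → A, (∀ u, f u ∈ En u) ∧
      (⨆ n, mdpHitWithin δ F
        (fun _ u a => if a = f u then 1 else 0) n [] s) = 1 := by
  classical
  obtain ⟨σ₀, hσ₀, hval₀⟩ := hex
  have hsS : Val En δ F s = 1 := by
    have h1 : (1:ℝ) ≤ Val En δ F s :=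
      hval₀ ▸ le_Val En δ F hδpos hδsum σ₀ hσ₀ s
    exact le_antisymm (Val_le_one En δ F hδpos hδsum hEn s) h1
  -- q : minimal positive enabled transition probability
  set P : Finset (Q × A × Q) :=
    Finset.univ.filter (fun p => p.2.1 ∈ En p.1 ∧ 0 < δ p.1 p.2.1 p.2.2) with hP
  have hPne : ((P.image fun p => δ p.1 p.2.1 p.2.2)).Nonempty := by
    refine Finset.image_nonempty.mpr ?_
    obtain ⟨a, haEn⟩ := hEn s
    have : ∃ t, 0 < δ s a t := by
      by_contra hno
      push_neg at hno
      have : ∑ t, δ s a t = 0 :=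
        Finset.sum_eq_zero fun t _ => le_antisymm (hno t) (hδpos s a t)
      rw [hδsum s a haEn] at this; norm_num at this
    obtain ⟨t, ht⟩ := this
    exact ⟨(s, a, t), by simp [hP, haEn, ht]⟩
  set q : ℝ := (P.image fun p => δ p.1 p.2.1 p.2.2).min' hPne with hqdef
  have hq_pos : 0 < q := by
    have hmem := Finset.min'_mem (P.image fun p => δ p.1 p.2.1 p.2.2) hPne
    rw [← hqdef] at hmem
    obtain ⟨p, hp, hpq⟩ := Finset.mem_image.mp hmem
    rw [hP, Finset.mem_filter] at hp
    rw [← hpq]; exact hp.2.2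
  have hq_le : ∀ u a t, a ∈ En u → δ u a t ≠ 0 → q ≤ δ u a t := by
    intro u a t haEn hδne
    refine Finset.min'_le _ _ ?_
    exact Finset.mem_image.mpr ⟨(u, a, t), by
      simp [hP, haEn, lt_of_le_of_ne (hδpos u a t) (Ne.symm hδne)], rfl⟩
  have hq_le_one : q ≤ 1 := by
    obtain ⟨a, haEn⟩ := hEn s
    have : ∃ t, 0 < δ s a t := by
      by_contra hno
      push_neg at hno
      have : ∑ t, δ s a t = 0 :=
        Finset.sum_eq_zero fun t _ => le_antisymm (hno t) (hδpos s a t)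
      rw [hδsum s a haEn] at this; norm_num at this
    obtain ⟨t, ht⟩ := this
    have h1 : q ≤ δ s a t := hq_le s a t haEn (ne_of_gt ht)
    have h2 : δ s a t ≤ 1 := by
      calc δ s a t ≤ ∑ t', δ s a t' :=
            Finset.single_le_sum (fun t' _ => hδpos s a t') (Finset.mem_univ t)
        _ = 1 := hδsum s a haEn
    linarith
  -- β : max value over states with value < 1
  set SCim : Finset ℝ :=
    insert 0 ((Finset.univ.filter (fun u => Val En δ F u ≠ 1)).image (Val En δ F)) with hSCim
  set β : ℝ := SCim.max' ⟨0, Finset.mem_insert_self 0 _⟩ with hβdef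
  have hβ0 : 0 ≤ β := Finset.le_max' _ 0 (Finset.mem_insert_self 0 _)
  have hβ1 : β < 1 := by
    rw [hβdef]
    refine (Finset.max'_lt_iff _ _).mpr ?_
    intro x hx
    rw [hSCim, Finset.mem_insert] at hx
    rcases hx with rfl | hx
    · norm_num
    · obtain ⟨u, hu, rfl⟩ := Finset.mem_image.mp hx
      rw [Finset.mem_filter] at hu
      exact lt_of_le_of_ne (Val_le_one En δ F hδpos hδsum hEn u) hu.2
  have hβle : ∀ u, Val En δ F u ≠ 1 → Val En δ F u ≤ β := by
    intro u hu
    refine Finset.le_max' _ _ ?_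
    rw [hSCim]
    exact Finset.mem_insert_of_mem
      (Finset.mem_image_of_mem _ (Finset.mem_filter.mpr ⟨Finset.mem_univ u, hu⟩))
  set c : ℝ := 1 - q * (1 - β) with hcdef
  have hc0 : 0 ≤ c := by rw [hcdef]; nlinarith
  have hβc : β ≤ c := by rw [hcdef]; nlinarith
  have hc1 : c < 1 := by rw [hcdef]; nlinarith
  -- Trap lemma: states of value 1 outside all layers have hit prob ≤ c < 1
  have trap : ∀ (σ : List (Q × A) → Q → A → ℝ), IsScheduler En σ → ∀ n h u,
      Val En δ F u = 1 → (∀ m, u ∉ Dset En δ F m) →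
      mdpHitWithin δ F σ n h u ≤ c := by
    intro σ hσ n
    induction n with
    | zero =>
      intro h u huS huR
      have huF : ¬ F u := fun hF => huR 0 ⟨huS, hF⟩
      simp only [mdpHitWithin, if_neg huF]
      exact hc0
    | succ n ih =>
      intro h u huS huR
      have huF : ¬ F u := fun hF => huR 0 ⟨huS, hF⟩
      simp only [mdpHitWithin, if_neg huF]
      have hinner : ∀ a ∈ En u,
          (∑ t, δ u a t * mdpHitWithin δ F σ n (h ++ [(u, a)]) t) ≤ c := by
        intro a haEn
        by_cases hgood : ∀ t, δ u a t ≠ 0 → Val En δ F t = 1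
        · have hsucc : ∀ t, δ u a t ≠ 0 → ∀ m, t ∉ Dset En δ F m := by
            intro t ht m htm
            exact huR (m+1) (Or.inr ⟨huS, a, haEn, hgood, t, ht, htm⟩)
          calc ∑ t, δ u a t * mdpHitWithin δ F σ n (h ++ [(u, a)]) t
              ≤ ∑ t, δ u a t * c := by
                refine Finset.sum_le_sum fun t _ => ?_
                rcases eq_or_ne (δ u a t) 0 with h0 | h0
                · rw [h0, zero_mul, zero_mul]
                · exact mul_le_mul_of_nonneg_left
                    (ih (h ++ [(u, a)]) t (hgood t h0) (hsucc t h0)) (hδpos u a t)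
            _ = c := by rw [← Finset.sum_mul, hδsum u a haEn, one_mul]
        · push_neg at hgood
          obtain ⟨t0, ht0δ, ht0S⟩ := hgood
          have hqδ : q ≤ δ u a t0 := hq_le u a t0 haEn ht0δ
          have hhit0 : mdpHitWithin δ F σ n (h ++ [(u, a)]) t0 ≤ β :=
            le_trans (hit_le_Val En δ F hδpos hδsum σ hσ n (h ++ [(u, a)]) t0)
              (hβle t0 ht0S)
          have hsplit : ∑ t, δ u a t * mdpHitWithin δ F σ n (h ++ [(u, a)]) t
              = δ u a t0 * mdpHitWithin δ F σ n (h ++ [(u, a)]) t0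
                + ∑ t ∈ Finset.univ.erase t0, δ u a t * mdpHitWithin δ F σ n (h ++ [(u, a)]) t :=
            (Finset.add_sum_erase _ _ (Finset.mem_univ t0)).symm
          have herase : ∑ t ∈ Finset.univ.erase t0, δ u a t = 1 - δ u a t0 := by
            rw [Finset.sum_erase_eq_sub (Finset.mem_univ t0), hδsum u a haEn]
          calc ∑ t, δ u a t * mdpHitWithin δ F σ n (h ++ [(u, a)]) t
              = δ u a t0 * mdpHitWithin δ F σ n (h ++ [(u, a)]) t0
                + ∑ t ∈ Finset.univ.erase t0, δ u a t * mdpHitWithin δ F σ n (h ++ [(u, a)]) t := hsplit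
            _ ≤ δ u a t0 * β + (1 - δ u a t0) := by
                refine add_le_add (mul_le_mul_of_nonneg_left hhit0 (hδpos u a t0)) ?_
                rw [← herase]
                refine Finset.sum_le_sum fun t _ => ?_
                nth_rewrite 2 [← mul_one (δ u a t)]
                exact mul_le_mul_of_nonneg_left
                  (hit_le_one_s16 En δ F σ hσ hδpos hδsum n (h ++ [(u, a)]) t) (hδpos u a t)
            _ ≤ c := by rw [hcdef]; nlinarith
      calc ∑ a, σ h u a * ∑ t, δ u a t * mdpHitWithin δ F σ n (h ++ [(u, a)]) t
          = ∑ a ∈ En u, σ h u a * ∑ t, δ u a t * mdpHitWithin δ F σ n (h ++ [(u, a)]) t := by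
            refine (Finset.sum_subset (Finset.subset_univ (En u)) ?_).symm
            intro a _ ha; rw [(hσ h u).2.1 a ha, zero_mul]
        _ ≤ ∑ a ∈ En u, σ h u a * c := by
            refine Finset.sum_le_sum fun a haEn => ?_
            exact mul_le_mul_of_nonneg_left (hinner a haEn) ((hσ h u).1 a)
        _ = c := by rw [← Finset.sum_mul, (hσ h u).2.2, one_mul]
  -- every value-1 state lies in some layer
  have hSR : ∀ u, Val En δ F u = 1 → ∃ m, u ∈ Dset En δ F m := by
    intro u huS
    by_contra hR
    push_neg at hR
    have hVc : Val En δ F u ≤ c := by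
      refine csSup_le (valSet_nonempty En δ F hEn u) ?_
      rintro x ⟨σ, hσ, rfl⟩
      exact ciSup_le fun n => trap σ hσ n [] u huS hR
    rw [huS] at hVc
    linarith
  -- construct the memoryless deterministic scheduler
  have key : ∀ u, ∃ a, a ∈ En u ∧ (Val En δ F u = 1 → ¬ F u →
      (∀ t, δ u a t ≠ 0 → Val En δ F t = 1) ∧
      ∃ m t, δ u a t ≠ 0 ∧ t ∈ Dset En δ F m ∧ u ∉ Dset En δ F m) := by
    intro u
    by_cases hu : Val En δ F u = 1 ∧ ¬ F u
    · obtain ⟨hu1, huF⟩ := hu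
      have hex' : ∃ m, u ∈ Dset En δ F m := hSR u hu1
      have hk := Nat.find_spec hex'
      cases hkk : Nat.find hex' with
      | zero =>
        rw [hkk] at hk
        exact absurd hk.2 huF
      | succ m =>
        rw [hkk] at hk
        have hnot : u ∉ Dset En δ F m := Nat.find_min hex' (by omega)
        rcases hk with h | h
        · exact absurd h hnot
        · obtain ⟨_, a, haEn, hsucc, t, htδ, htm⟩ := h
          exact ⟨a, haEn, fun _ _ => ⟨hsucc, m, t, htδ, htm, hnot⟩⟩
    · exact ⟨(hEn u).choose, (hEn u).choose_spec, fun h1 h2 => absurd ⟨h1, h2⟩ hu⟩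
  choose f hf1 hf2 using key
  -- lower bound on layers
  have D3 : ∀ n u, u ∈ Dset En δ F n → q ^ n ≤ detHit δ F f n u := by
    intro n
    induction n with
    | zero =>
      intro u hu
      rw [pow_zero]
      simp [detHit, hu.2]
    | succ n ih =>
      intro u hu
      by_cases huF : F u
      · rw [detHit_of_F δ F f u huF]
        exact pow_le_one₀ (le_of_lt hq_pos) hq_le_one
      · have hu1 : Val En δ F u = 1 := Dset_subset_val En δ F (n+1) u hu
        obtain ⟨hsucc, m, t, htδ, htm, hnotm⟩ := hf2 u hu1 huF
        have hmn : m ≤ n := by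
          by_contra hmm
          push_neg at hmm
          exact hnotm (Dset_mono En δ F (by omega) hu)
        have htn : t ∈ Dset En δ F n := Dset_mono En δ F hmn htm
        have h1 : q * q ^ n ≤ δ u (f u) t * detHit δ F f n t :=
          mul_le_mul (hq_le u (f u) t (hf1 u) htδ) (ih t htn)
            (pow_nonneg (le_of_lt hq_pos) n) (hδpos u (f u) t)
        have h2 : δ u (f u) t * detHit δ F f n t
            ≤ ∑ t', δ u (f u) t' * detHit δ F f n t' :=
          Finset.single_le_sum
            (fun t' _ => mul_nonneg (hδpos u (f u) t') (detHit_nonneg δ F hδpos f n t'))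
            (Finset.mem_univ t)
        simp only [detHit, if_neg huF]
        calc q ^ (n+1) = q * q ^ n := by ring
          _ ≤ _ := le_trans h1 h2
  -- contraction
  have inner : ∀ (m : ℕ) (M : ℝ), 0 ≤ M →
      (∀ v, Val En δ F v = 1 → 1 - detHit δ F f m v ≤ M) →
      ∀ n u, Val En δ F u = 1 →
        1 - detHit δ F f (n + m) u ≤ (1 - detHit δ F f n u) * M := by
    intro m M hM hIH n
    induction n with
    | zero =>
      intro u huS
      by_cases huF : F u
      · rw [zero_add, detHit_of_F δ F f u huF, detHit_of_F δ F f u huF]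
        simp
      · have h0 : detHit δ F f 0 u = 0 := by simp [detHit, huF]
        rw [zero_add, h0]
        simpa using hIH u huS
    | succ n ih =>
      intro u huS
      by_cases huF : F u
      · rw [detHit_of_F δ F f u huF, detHit_of_F δ F f u huF]
        simp
      · obtain ⟨hsucc, _⟩ := hf2 u huS huF
        have hstep : detHit δ F f (n + 1 + m) u
            = ∑ t, δ u (f u) t * detHit δ F f (n + m) t := by
          have he : n + 1 + m = (n + m) + 1 := by omega
          rw [he]
          simp only [detHit, if_neg huF]
        have hstep' : detHit δ F f (n + 1) u
            = ∑ t, δ u (f u) t * detHit δ F f n t := by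
          simp only [detHit, if_neg huF]
        rw [hstep, hstep']
        have hδ1 : ∑ t, δ u (f u) t = 1 := hδsum u (f u) (hf1 u)
        have e1 : 1 - ∑ t, δ u (f u) t * detHit δ F f (n + m) t
            = ∑ t, δ u (f u) t * (1 - detHit δ F f (n + m) t) := by
          simp only [mul_sub, mul_one, Finset.sum_sub_distrib, hδ1]
        have e2 : (1 - ∑ t, δ u (f u) t * detHit δ F f n t) * M
            = ∑ t, δ u (f u) t * ((1 - detHit δ F f n t) * M) := by
          have : ∑ t, δ u (f u) t * ((1 - detHit δ F f n t) * M)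
              = (∑ t, δ u (f u) t * (1 - detHit δ F f n t)) * M := by
            rw [Finset.sum_mul]
            exact Finset.sum_congr rfl fun t _ => (mul_assoc _ _ _).symm
          rw [this]
          congr 1
          simp only [mul_sub, mul_one, Finset.sum_sub_distrib, hδ1]
        rw [e1, e2]
        refine Finset.sum_le_sum fun t _ => ?_
        rcases eq_or_ne (δ u (f u) t) 0 with h0 | h0
        · rw [h0, zero_mul, zero_mul]
        · exact mul_le_mul_of_nonneg_left (ih t (hsucc t h0)) (hδpos u (f u) t)
  -- a uniform layer bound
  have hN : ∃ N, ∀ u, Val En δ F u = 1 → u ∈ Dset En δ F N := by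
    set g : Q → ℕ := fun u => if h : ∃ m, u ∈ Dset En δ F m then Nat.find h else 0 with hg
    refine ⟨Finset.univ.sup g, fun u huS => ?_⟩
    have hex' : ∃ m, u ∈ Dset En δ F m := hSR u huS
    have h1 : u ∈ Dset En δ F (Nat.find hex') := Nat.find_spec hex'
    have h2 : g u = Nat.find hex' := dif_pos hex'
    refine Dset_mono En δ F ?_ h1
    rw [← h2]
    exact Finset.le_sup (Finset.mem_univ u)
  obtain ⟨N, hNs⟩ := hN
  set r : ℝ := 1 - q ^ N with hrdef
  have hr0 : 0 ≤ r := by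
    rw [hrdef]
    have := pow_le_one₀ (le_of_lt hq_pos) hq_le_one (n := N)
    linarith
  have hr1 : r < 1 := by
    rw [hrdef]
    have := pow_pos hq_pos N
    linarith
  have claim : ∀ k u, Val En δ F u = 1 → 1 - detHit δ F f (k * N) u ≤ r ^ k := by
    intro k
    induction k with
    | zero =>
      intro u huS
      simp only [Nat.zero_mul, pow_zero]
      have := detHit_nonneg δ F hδpos f 0 u
      linarith
    | succ k ih =>
      intro u huS
      have h1 := inner (k * N) (r ^ k) (pow_nonneg hr0 k) (fun v hv => ih v hv) N u huS
      have h2 : q ^ N ≤ detHit δ F f N u := D3 N u (hNs u huS)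
      have h3 : 1 - detHit δ F f N u ≤ r := by rw [hrdef]; linarith
      have hidx : (k + 1) * N = N + k * N := by ring
      rw [hidx]
      calc 1 - detHit δ F f (N + k * N) u ≤ (1 - detHit δ F f N u) * r ^ k := h1
        _ ≤ r * r ^ k := mul_le_mul_of_nonneg_right h3 (pow_nonneg hr0 k)
        _ = r ^ (k + 1) := by ring
  -- conclude
  refine ⟨f, hf1, ?_⟩
  have hrw : (fun n => mdpHitWithin δ F (fun _ u a => if a = f u then 1 else 0) n [] s)
      = fun n => detHit δ F f n s := by
    funext n; exact mdpHitWithin_eq_detHit δ F f n [] s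
  rw [hrw]
  have hbdd : BddAbove (Set.range fun n => detHit δ F f n s) := by
    refine ⟨1, ?_⟩
    rintro x ⟨n, rfl⟩
    exact detHit_le_one En δ F hδpos hδsum f hf1 n s
  apply le_antisymm
  · exact ciSup_le fun n => detHit_le_one En δ F hδpos hδsum f hf1 n s
  · have hterm : ∀ k : ℕ, 1 - r ^ k ≤ ⨆ n, detHit δ F f n s := by
      intro k
      have hc := claim k s hsS
      calc 1 - r ^ k ≤ detHit δ F f (k * N) s := by linarith
        _ ≤ ⨆ n, detHit δ F f n s := le_ciSup hbdd (k * N)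
    have htend : Filter.Tendsto (fun k : ℕ => 1 - r ^ k) Filter.atTop (nhds 1) := by
      have h0 : Filter.Tendsto (fun k : ℕ => r ^ k) Filter.atTop (nhds 0) :=
        tendsto_pow_atTop_nhds_zero_of_lt_one hr0 hr1
      simpa using Filter.Tendsto.const_sub 1 h0
    exact le_of_tendsto' htend hterm
end

section
/- Consider the BPP step relation on ℕ^Γ and an upward-closed set F with minimal elements φ_1, ..., φ_m, and K = max over i, X of φ_i(X). Call X ∈ Γ saturated in α if α(Y) ≥ K for every successor Y of X in the rule graph G. If α ∈ F̄ (complement of F) and X is saturated in α with α(X) > K, then applying any rule X ↪ β to α yields a configuration α' with α'(Y) ≥ K for all Y ∈ succ(X), and α' ≥ ⌊α⌋ componentwise on all non-successors of X, where ⌊α⌋ caps saturated coordinates at K. -/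
open scoped Classical

variable {Γ : Type*} [Fintype Γ] [DecidableEq Γ]

/-- Edge of the rule graph: `(X, Y)` whenever some rule `X ↪ β` has `β Y ≥ 1`. -/
def Edge (rules : Finset (Γ × (Γ → ℕ))) (X Y : Γ) : Prop :=
  ∃ r ∈ rules, r.1 = X ∧ 1 ≤ r.2 Y

/-- `X` is saturated in `α`: every successor of `X` has at least `K` processes. -/
def Saturated (rules : Finset (Γ × (Γ → ℕ))) (K : ℕ) (α : Γ → ℕ) (X : Γ) : Prop :=
  ∀ Y, Relation.ReflTransGen (Edge rules) X Y → K ≤ α Y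

/-- `⌊α⌋` caps saturated coordinates at `K`. -/
noncomputable def floorConf (rules : Finset (Γ × (Γ → ℕ))) (K : ℕ)
    (α : Γ → ℕ) : Γ → ℕ :=
  fun Z => if Saturated rules K α Z then K else α Z

/-- Scheduling a saturated type `X` with `α X > K` keeps all successors of `X`
at level `≥ K` and does not decrease `⌊α⌋` on non-successors of `X`. -/
theorem saturated_schedule_safe
    (rules : Finset (Γ × (Γ → ℕ))) (m : ℕ) (φ : Fin m → (Γ → ℕ))
    (F : Set (Γ → ℕ)) (hF : F = ⋃ i, {β | φ i ≤ β})
    (K : ℕ) (hK : K = Finset.univ.sup (fun p : Fin m × Γ => φ p.1 p.2))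
    (α : Γ → ℕ) (hα : α ∉ F)
    (X : Γ) (hsat : Saturated rules K α X) (hX : K < α X)
    (β : Γ → ℕ) (hr : (X, β) ∈ rules) :
    (∀ Y, Relation.ReflTransGen (Edge rules) X Y →
        K ≤ applyRule α (X, β) Y) ∧
      (∀ Z, ¬ Relation.ReflTransGen (Edge rules) X Z →
        floorConf rules K α Z ≤ applyRule α (X, β) Z) := by
  constructor
  · intro Y hY
    simp only [applyRule]
    by_cases h : Y = X
    · subst h
      have : K + 1 ≤ α Y := hX
      simp only [if_true, eq_self_iff_true]
      omega
    · simp only [if_neg h]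
      have := hsat Y hY
      omega
  · intro Z hZ
    have hZX : Z ≠ X := fun h => hZ (h ▸ Relation.ReflTransGen.refl)
    simp only [applyRule, floorConf, if_neg hZX]
    by_cases h : Saturated rules K α Z
    · have := h Z Relation.ReflTransGen.refl
      simp only [if_pos h]
      omega
    · simp only [if_neg h]
      omega
end

section
/- Let Γ be finite, → the BPP step relation on ℕ^Γ, F upward-closed with complement F̄, and γ ∈ ℕ^Γ. The Karp–Miller-style search tree—exploring paths α_0 → α_1 → ... through F̄ and pruning any node α_k for which some ancestor α_j (j < k) satisfies α_j ≤ α_k—is finite, and it contains a node α_k with α_k ≤ γ if and only if there exists a path from α_0 through F̄ to some configuration ≤ γ. -/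
variable {Γ : Type*} [Fintype Γ] [DecidableEq Γ]

/-- The nodes of the Karp–Miller-style search tree from `α₀`: paths through
the complement of `F` in which no non-final node dominates-from-above an
earlier node (pruned nodes are leaves: a node with an ancestor below it is
kept but not expanded). -/
def KMTree (rules : Finset (Γ × (Γ → ℕ))) (F : Set (Γ → ℕ)) (α₀ : Γ → ℕ) :
    Set (List (Γ → ℕ)) :=
  {l | l.head? = some α₀ ∧ List.Chain' (Step rules) l ∧
    (∀ β ∈ l, β ∉ F) ∧
    ∀ i j : ℕ, i < j → j + 1 < l.length →
      ∀ a b, l[i]? = some a → l[j]? = some b → ¬ a ≤ b}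


/-! The search tree is finitely branching, so if it were infinite, Kőnig's lemma would give an
infinite branch `α₀ α₁ …`; by Dickson's lemma `αᵢ ≤ αⱼ` for some `i < j`, and then the node
`α₀ … αⱼ₊₁` would be pruned, a contradiction.

For completeness, take a shortest run from `α₀` through `F̄` ending below `γ`. If it had
`αᵢ ≤ αⱼ` with `i < j`, the configuration `αᵢ` could replay the run from `αⱼ`: a smaller BPP
configuration mimics each step of a larger one, skipping a step exactly when it lacks the
process that the rule rewrites, and stays below it; since `F̄` is downward closed, this gives a
strictly shorter run. So a shortest run is never pruned and is a node of the tree. -/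

section Lists

variable {R : Type*} {T : Set (List R)}

theorem Set.Infinite.exists_append_singleton_prefix_infinite {p : List R}
    (hp : {l ∈ T | p <+: l}.Infinite) (hfin : {x | ∃ l ∈ T, p ++ [x] <+: l}.Finite) :
    ∃ x, {l ∈ T | p ++ [x] <+: l}.Infinite := by
  by_contra! h
  refine hp (((hfin.biUnion fun x _ => h x).insert p).subset ?_)
  rintro l ⟨hl, t, rfl⟩
  cases t with
  | nil => simp
  | cons x t =>
    have hx : p ++ [x] <+: p ++ x :: t := ⟨t, by simp⟩
    exact Or.inr (Set.mem_biUnion ⟨_, hl, hx⟩ ⟨hl, hx⟩)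

/-- Kőnig's lemma for trees of lists. -/
theorem Set.Infinite.exists_seq_forall_ofFn_prefix (hT : T.Infinite)
    (hfin : ∀ p, {x | ∃ l ∈ T, p ++ [x] <+: l}.Finite) :
    ∃ f : ℕ → R, ∀ n, ∃ l ∈ T, (List.ofFn fun i : Fin n => f i) <+: l := by
  choose next hnext using fun p : {p : List R // {l ∈ T | p <+: l}.Infinite} =>
    p.2.exists_append_singleton_prefix_infinite (hfin p)
  let P : ℕ → {p : List R // {l ∈ T | p <+: l}.Infinite} :=
    fun n => Nat.rec ⟨[], by simpa using hT⟩ (fun _ p => ⟨p.1 ++ [next p], hnext p⟩) n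
  have hP : ∀ n, (P n).1 = List.ofFn fun i : Fin n => next (P i) := by
    intro n
    induction n with
    | zero => rfl
    | succ n ih =>
      simp only [List.ofFn_succ', List.concat_eq_append, Fin.val_castSucc, Fin.val_last, ← ih]
      rfl
  refine ⟨fun n => next (P n), fun n => ?_⟩
  obtain ⟨l, hl, hpre⟩ := (P n).2.nonempty
  exact ⟨l, hl, hP n ▸ hpre⟩

theorem List.exists_eq_append_cons_append_cons {α : Type*} {a b : α} {l : List α}
    (h : [a, b].Sublist l) : ∃ L K M, l = L ++ a :: K ++ b :: M := by
  obtain ⟨r₁, r₂, rfl, ha, hb⟩ := List.cons_sublist_iff.1 h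
  obtain ⟨L, K, rfl⟩ := List.append_of_mem ha
  obtain ⟨K', M, rfl⟩ := List.append_of_mem (List.singleton_sublist.1 hb)
  exact ⟨L, K ++ K', M, by simp⟩

theorem List.getLast?_append_cons_eq_getLastD {α : Type*} {L M : List α} {a : α} :
    (L ++ a :: M).getLast? = some (M.getLastD a) := by
  rw [List.getLast?_append_cons, List.getLast?_cons, List.getLastD_eq_getLast?]

end Lists

section Runs

omit [Fintype Γ]

variable {rules : Finset (Γ × (Γ → ℕ))} {F : Set (Γ → ℕ)} {α₀ : Γ → ℕ}

def IsRun (rules : Finset (Γ × (Γ → ℕ))) (F : Set (Γ → ℕ)) (l : List (Γ → ℕ)) : Prop :=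
  l.IsChain (Step rules) ∧ ∀ β ∈ l, β ∉ F

theorem finite_setOf_step (rules : Finset (Γ × (Γ → ℕ))) (β : Γ → ℕ) :
    {γ | Step rules β γ}.Finite :=
  (rules.finite_toSet.image (applyRule β)).subset fun _ ⟨r, hr, _, hγ⟩ => ⟨r, hr, hγ.symm⟩

theorem Step.le_or_exists_step_le {a b c : Γ → ℕ} (h : Step rules b c) (hab : a ≤ b) :
    a ≤ c ∨ ∃ a', Step rules a a' ∧ a' ≤ c := by
  obtain ⟨r, hr, -, rfl⟩ := h
  by_cases ha : 1 ≤ a r.1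
  · refine Or.inr ⟨applyRule a r, ⟨r, hr, ha, rfl⟩, fun Y => ?_⟩
    have hY : a Y ≤ b Y := hab Y
    simp only [applyRule]
    omega
  · refine Or.inl fun Y => ?_
    have hY : a Y ≤ b Y := hab Y
    simp only [applyRule]
    split_ifs with hYr
    · subst hYr
      omega
    · omega

theorem isRun_append_cons {L M : List (Γ → ℕ)} {a : Γ → ℕ} :
    IsRun rules F (L ++ a :: M) ↔ IsRun rules F (L ++ [a]) ∧ IsRun rules F (a :: M) := by
  unfold IsRun
  rw [List.isChain_split]
  simp only [List.mem_append, List.mem_cons]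
  grind

theorem isRun_singleton {a : Γ → ℕ} : IsRun rules F [a] ↔ a ∉ F := by
  simp [IsRun]

theorem isRun_cons_cons {a b : Γ → ℕ} {l : List (Γ → ℕ)} :
    IsRun rules F (a :: b :: l) ↔ Step rules a b ∧ a ∉ F ∧ IsRun rules F (b :: l) := by
  simp only [IsRun, List.isChain_cons_cons, List.mem_cons, forall_eq_or_imp]
  tauto

theorem IsRun.exists_le_of_le (hF : IsUpperSet F) {a b : Γ → ℕ} {l : List (Γ → ℕ)}
    (hl : IsRun rules F (b :: l)) (hab : a ≤ b) :
    ∃ l', l'.length ≤ l.length ∧ IsRun rules F (a :: l') ∧ l'.getLastD a ≤ l.getLastD b := by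
  have ha : a ∉ F := fun ha => hl.2 b List.mem_cons_self (hF hab ha)
  induction l generalizing a b with
  | nil => exact ⟨[], le_rfl, isRun_singleton.2 ha, hab⟩
  | cons c l ih =>
    obtain ⟨hbc, -, hc⟩ := isRun_cons_cons.1 hl
    rcases hbc.le_or_exists_step_le hab with hac | ⟨a', haa', ha'c⟩
    · obtain ⟨l', hlen, hrun, hlast⟩ := ih hc hac ha
      exact ⟨l', by simp only [List.length_cons]; omega, hrun, by rwa [List.getLastD_cons]⟩
    · have ha' : a' ∉ F := fun ha' => hc.2 c List.mem_cons_self (hF ha'c ha')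
      obtain ⟨l', hlen, hrun, hlast⟩ := ih hc ha'c ha'
      exact ⟨a' :: l', by simpa using hlen, isRun_cons_cons.2 ⟨haa', ha, hrun⟩,
        by rwa [List.getLastD_cons, List.getLastD_cons]⟩

theorem IsRun.exists_shortcut (hF : IsUpperSet F) {L K M : List (Γ → ℕ)} {a b : Γ → ℕ}
    (hl : IsRun rules F (L ++ a :: K ++ b :: M)) (hab : a ≤ b) :
    ∃ M', M'.length ≤ M.length ∧ IsRun rules F (L ++ a :: M') ∧ M'.getLastD a ≤ M.getLastD b := by
  have hb : IsRun rules F (b :: M) := (isRun_append_cons.1 hl).2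
  rw [List.append_assoc, List.cons_append, isRun_append_cons] at hl
  obtain ⟨M', hlen, hrun, hlast⟩ := hb.exists_le_of_le hF hab
  exact ⟨M', hlen, isRun_append_cons.2 ⟨hl.1, hrun⟩, hlast⟩

theorem mem_KMTree_iff {l : List (Γ → ℕ)} :
    l ∈ KMTree rules F α₀ ↔
      l.head? = some α₀ ∧ IsRun rules F l ∧ l.dropLast.Pairwise fun a b => ¬ a ≤ b := by
  have hanti : (∀ i j : ℕ, i < j → j + 1 < l.length →
      ∀ a b, l[i]? = some a → l[j]? = some b → ¬ a ≤ b) ↔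
      l.dropLast.Pairwise fun a b => ¬ a ≤ b := by
    simp only [List.pairwise_iff_getElem, List.getElem_dropLast, List.length_dropLast,
      List.getElem?_eq_some_iff]
    constructor
    · intro h i j hi hj hij
      exact h i j hij (by omega) _ _ ⟨_, rfl⟩ ⟨_, rfl⟩
    · rintro h i j hij hj a b ⟨_, rfl⟩ ⟨_, rfl⟩
      exact h i j (by omega) (by omega) hij
  rw [← hanti]
  simp only [KMTree, IsRun, Set.mem_ofPred_eq, and_assoc]
  rfl

theorem exists_mem_KMTree_of_isRun (hF : IsUpperSet F) {γ : Γ → ℕ} (l : List (Γ → ℕ))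
    (hhead : l.head? = some α₀) (hl : IsRun rules F l) (hγ : ∃ β, l.getLast? = some β ∧ β ≤ γ) :
    ∃ l' ∈ KMTree rules F α₀, ∃ β, l'.getLast? = some β ∧ β ≤ γ := by
  by_cases hanti : l.dropLast.Pairwise fun a b => ¬ a ≤ b
  · exact ⟨l, mem_KMTree_iff.2 ⟨hhead, hl, hanti⟩, hγ⟩
  obtain ⟨a, b, hsub, hab⟩ : ∃ a b, [a, b].Sublist l ∧ a ≤ b := by
    simpa [List.pairwise_iff_forall_sublist] using
      mt (List.Pairwise.sublist l.dropLast_sublist) hanti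
  obtain ⟨L, K, M, hsplit⟩ := List.exists_eq_append_cons_append_cons hsub
  rw [hsplit] at hhead hl hγ
  obtain ⟨M', hlen, hrun, hlast⟩ := hl.exists_shortcut hF hab
  have hshorter : (L ++ a :: M').length < l.length := by
    simp only [hsplit, List.length_append, List.length_cons]
    omega
  obtain ⟨β, hβ, hβγ⟩ := hγ
  rw [List.getLast?_append_cons_eq_getLastD, Option.some_inj] at hβ
  exact exists_mem_KMTree_of_isRun hF (L ++ a :: M') (by simpa using hhead) hrun
    ⟨_, List.getLast?_append_cons_eq_getLastD, hlast.trans (hβ ▸ hβγ)⟩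
termination_by l.length
decreasing_by exact hshorter

theorem finite_setOf_append_singleton_prefix_mem_KMTree (p : List (Γ → ℕ)) :
    {x | ∃ l ∈ KMTree rules F α₀, p ++ [x] <+: l}.Finite := by
  refine ((p.finite_toSet.biUnion fun β _ => finite_setOf_step rules β).insert α₀).subset ?_
  rintro x ⟨l, hl, hpre⟩
  obtain ⟨hhead, hrun, -⟩ := mem_KMTree_iff.1 hl
  rcases p.eq_nil_or_concat with rfl | ⟨q, β, rfl⟩
  · obtain ⟨t, rfl⟩ := hpre
    simpa using hhead
  · have hchain := hrun.1.infix hpre.isInfix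
    rw [List.concat_eq_append, List.isChain_append] at hchain
    exact Or.inr (Set.mem_biUnion (by simp) (hchain.2.2 β (by simp) x (by simp)))

theorem isRun_ofFn_iff {k : ℕ} {s : ℕ → Γ → ℕ} :
    IsRun rules F (List.ofFn fun i : Fin (k + 1) => s i) ↔
      (∀ i < k, Step rules (s i) (s (i + 1))) ∧ ∀ i ≤ k, s i ∉ F := by
  unfold IsRun
  simp only [List.isChain_ofFn, List.forall_mem_ofFn_iff, Fin.forall_iff, Nat.add_one_le_iff,
    Nat.lt_add_one_iff]

theorem exists_path_iff_exists_isRun {γ : Γ → ℕ} :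
    (∃ k, ∃ s : ℕ → (Γ → ℕ), s 0 = α₀ ∧ (∀ i < k, Step rules (s i) (s (i + 1))) ∧
        (∀ i ≤ k, s i ∉ F) ∧ s k ≤ γ) ↔
      ∃ l, l.head? = some α₀ ∧ IsRun rules F l ∧ ∃ β, l.getLast? = some β ∧ β ≤ γ := by
  constructor
  · rintro ⟨k, s, hs0, hstep, hsF, hγ⟩
    refine ⟨List.ofFn fun i : Fin (k + 1) => s i, by simp [hs0], isRun_ofFn_iff.2 ⟨hstep, hsF⟩,
      s k, ?_, hγ⟩
    rw [List.getLast?_eq_getElem?, List.length_ofFn, Nat.add_sub_cancel, List.getElem?_ofFn,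
      dif_pos k.lt_add_one]
  · rintro ⟨l, hhead, hl, β, hβ, hγ⟩
    obtain ⟨m, rfl⟩ := List.head?_eq_some_iff.1 hhead
    let s : ℕ → Γ → ℕ := fun i => (α₀ :: m).getD i α₀
    have hofFn : (List.ofFn fun i : Fin (m.length + 1) => s i) = α₀ :: m :=
      List.ext_getElem (by simp) fun i _ _ => by simp [s]
    obtain ⟨hstep, hsF⟩ := isRun_ofFn_iff.1 (hofFn ▸ hl)
    refine ⟨m.length, s, rfl, hstep, hsF, ?_⟩
    rw [List.getLast?_eq_getElem?, List.getElem?_eq_getElem (by simp), Option.some_inj] at hβ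
    simpa [s, List.getD_eq_getElem?_getD, ← hβ] using hγ

end Runs

theorem finite_KMTree (rules : Finset (Γ × (Γ → ℕ))) (F : Set (Γ → ℕ)) (α₀ : Γ → ℕ) :
    (KMTree rules F α₀).Finite := by
  by_contra hinf
  obtain ⟨f, hf⟩ := Set.Infinite.exists_seq_forall_ofFn_prefix hinf
    finite_setOf_append_singleton_prefix_mem_KMTree
  obtain ⟨i, j, hij, hle⟩ := wellQuasiOrdered_le f
  obtain ⟨l, hl, t, rfl⟩ := hf (j + 2)
  have hanti := (mem_KMTree_iff.1 hl).2.2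
  rw [List.ofFn_succ', List.concat_eq_append, List.append_assoc, List.singleton_append,
    List.dropLast_append_cons] at hanti
  exact List.pairwise_ofFn.1 (List.pairwise_append.1 hanti).1
    (show (⟨i, by omega⟩ : Fin (j + 1)) < ⟨j, by omega⟩ from hij) hle

theorem karp_miller_tree_finite_and_complete_general
    (rules : Finset (Γ × (Γ → ℕ))) (F : Set (Γ → ℕ))
    (hF : ∀ α ∈ F, ∀ β, α ≤ β → β ∈ F)
    (α₀ : Γ → ℕ) (γ : Γ → ℕ) :
    (KMTree rules F α₀).Finite ∧
      ((∃ l ∈ KMTree rules F α₀, ∃ β, l.getLast? = some β ∧ β ≤ γ) ↔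
        ∃ k, ∃ s : ℕ → (Γ → ℕ), s 0 = α₀ ∧
          (∀ i < k, Step rules (s i) (s (i + 1))) ∧
          (∀ i ≤ k, s i ∉ F) ∧ s k ≤ γ) := by
  refine ⟨finite_KMTree rules F α₀, ?_⟩
  rw [exists_path_iff_exists_isRun]
  constructor
  · rintro ⟨l, hl, hγ⟩
    obtain ⟨hhead, hrun, -⟩ := mem_KMTree_iff.1 hl
    exact ⟨l, hhead, hrun, hγ⟩
  · rintro ⟨l, hhead, hrun, hγ⟩
    exact exists_mem_KMTree_of_isRun (fun _ _ hab ha => hF _ ha _ hab) l hhead hrun hγ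

/-- The Karp–Miller-style search tree for coverability-from-below is finite,
and it contains a node ending in a configuration `≤ γ` iff there is a path
from `α₀` through the complement of the upward-closed set `F` to a
configuration `≤ γ`. -/
theorem karp_miller_tree_finite_and_complete
    (rules : Finset (Γ × (Γ → ℕ))) (F : Set (Γ → ℕ))
    (hF : ∀ α ∈ F, ∀ β, α ≤ β → β ∈ F)
    (α₀ : Γ → ℕ) (hα₀ : α₀ ∉ F) (γ : Γ → ℕ) :
    (KMTree rules F α₀).Finite ∧
      ((∃ l ∈ KMTree rules F α₀, ∃ β, l.getLast? = some β ∧ β ≤ γ) ↔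
        ∃ k, ∃ s : ℕ → (Γ → ℕ), s 0 = α₀ ∧
          (∀ i < k, Step rules (s i) (s (i + 1))) ∧
          (∀ i ≤ k, s i ∉ F) ∧ s k ≤ γ) :=
  karp_miller_tree_finite_and_complete_general rules F hF α₀ γ
end
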